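/- arXiv:1105.0245 — 3 statements merged into one kernel-verified Lean document; each statement's English description precedes it below -/
import Mathlib

section
/- For every natural number n, every associative unital algebra R over the complex numbers (not assumed commutative), and all elements a, b of R satisfying 2ab = a² + b² + 1, one has aⁿ·b = C_n(a) + A_n(b), where C_n(a) and A_n(b) denote the evaluations of the polynomials C_n and A_n at a and b via the algebra structure map. -/
open Polynomial Finset

/-- The pair of polynomial sequences (Aₙ, Cₙ) from the paper:
A₀ = X, C₀ = 0, and
A_{n+1} = ((n+1)/(n+2))·(X·Aₙ + ∑_{k=0}^{n} λₙᵏ·A_k),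
C_{n+1} = ((n+1)/(n+2))·((X²+1)·Xⁿ + ∑_{k=0}^{n} λₙᵏ·C_k),
where λₙᵏ is the coefficient of Xᵏ in Cₙ. -/
noncomputable def AC : ℕ → Polynomial ℂ × Polynomial ℂ
  | 0 => (Polynomial.X, 0)
  | (n+1) =>
    (((n+1 : ℂ)/(n+2)) • (Polynomial.X * (AC n).1 +
        ∑ k ∈ (Finset.range (n+1)).attach, ((AC n).2.coeff k) • (AC k).1),
     ((n+1 : ℂ)/(n+2)) • ((Polynomial.X^2 + 1) * Polynomial.X^n +
        ∑ k ∈ (Finset.range (n+1)).attach, ((AC n).2.coeff k) • (AC k).2))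
  decreasing_by
  all_goals first
    | exact Nat.lt_succ_self n
    | exact Nat.lt_succ_of_lt (Finset.mem_range.mp k.2)
    | exact Finset.mem_range.mp k.2

noncomputable def polyA (n : ℕ) : Polynomial ℂ := (AC n).1
noncomputable def polyC (n : ℕ) : Polynomial ℂ := (AC n).2

lemma polyA_zero : polyA 0 = Polynomial.X := by rw [polyA, AC]
lemma polyC_zero : polyC 0 = 0 := by rw [polyC, AC]

lemma recA (n : ℕ) : polyA (n+1) = ((n+1 : ℂ)/(n+2)) • (Polynomial.X * polyA n +
    ∑ k ∈ Finset.range (n+1), ((polyC n).coeff k) • (polyA k)) := by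
  rw [polyA, AC]
  simp [polyA, polyC, ← Finset.sum_attach (Finset.range (n+1)) (fun k => ((AC n).2.coeff k) • (AC k).1)]

lemma recC (n : ℕ) : polyC (n+1) = ((n+1 : ℂ)/(n+2)) • ((Polynomial.X^2 + 1) * Polynomial.X^n +
    ∑ k ∈ Finset.range (n+1), ((polyC n).coeff k) • (polyC k)) := by
  rw [polyC, AC]
  simp [polyC, ← Finset.sum_attach (Finset.range (n+1)) (fun k => ((AC n).2.coeff k) • (AC k).2)]

lemma degC (n : ℕ) : (polyC n).natDegree ≤ n + 1 := by
  induction n using Nat.strong_induction_on with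
  | _ n ih =>
    match n with
    | 0 => simp [polyC_zero]
    | Nat.succ m =>
      rw [recC]
      refine le_trans (natDegree_smul_le _ _) (le_trans (natDegree_add_le _ _) ?_)
      refine max_le (le_trans (natDegree_mul_le) ?_) ?_
      · have h1 : (Polynomial.X ^ 2 + 1 : Polynomial ℂ).natDegree ≤ 2 :=
          le_trans (natDegree_add_le _ _) (by simp)
        have h2 : (Polynomial.X ^ m : Polynomial ℂ).natDegree ≤ m := by simp
        omega
      · refine Polynomial.natDegree_sum_le_of_forall_le _ _ fun k hk => ?_
        refine le_trans (natDegree_smul_le _ _) ?_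
        have := ih k (Finset.mem_range.mp hk)
        have hk' := Finset.mem_range.mp hk
        omega

lemma coeffC (n : ℕ) : (polyC n).coeff (n+1) = (n : ℂ)/(n+1) := by
  induction n using Nat.strong_induction_on with
  | _ n ih =>
    match n with
    | 0 => simp [polyC_zero]
    | Nat.succ m =>
      rw [recC]
      rw [Polynomial.coeff_smul, Polynomial.coeff_add, Polynomial.finset_sum_coeff]
      have h1 : ((Polynomial.X^2 + 1) * Polynomial.X^m : Polynomial ℂ).coeff (m+1+1) = 1 := by
        rw [add_mul, one_mul, ← pow_add]
        simp only [Polynomial.coeff_add, Polynomial.coeff_X_pow]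
        rw [if_pos (by omega), if_neg (by omega)]; ring
      have h2 : ∀ k ∈ Finset.range (m+1),
          (((polyC m).coeff k) • (polyC k)).coeff (m+1+1) = 0 := by
        intro k hk
        rw [Polynomial.coeff_smul]
        have : (polyC k).coeff (m+2) = 0 := by
          apply Polynomial.coeff_eq_zero_of_natDegree_lt
          have := degC k
          have := Finset.mem_range.mp hk
          omega
        simp [this]
      rw [Finset.sum_congr rfl h2, h1]
      simp only [Finset.sum_const_zero, add_zero, smul_eq_mul, mul_one]
      push_cast
      ring_nf

theorem stmt1 (n : ℕ) (R : Type*) [Ring R] [Algebra ℂ R] (a b : R)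
    (h : 2 * (a * b) = a ^ 2 + b ^ 2 + 1) :
    a ^ n * b = Polynomial.aeval a (polyC n) + Polynomial.aeval b (polyA n) := by
  induction n using Nat.strong_induction_on with
  | _ n ih =>
    match n with
    | 0 => simp [polyA_zero, polyC_zero]
    | Nat.succ m =>
      have hm1 : ((m:ℂ) + 1) ≠ 0 := Nat.cast_add_one_ne_zero m
      have hm2 : ((m:ℂ) + 2) ≠ 0 := by
        have : (((m+2:ℕ)):ℂ) ≠ 0 := Nat.cast_ne_zero.mpr (by omega)
        push_cast at this; convert this using 2 <;> norm_num
      have ihm := ih m (Nat.lt_succ_self m)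
      have hQ : Polynomial.aeval b (polyA m) * b = b * Polynomial.aeval b (polyA m) := by
        have h1 : Polynomial.aeval b (polyA m * Polynomial.X)
            = Polynomial.aeval b (Polynomial.X * polyA m) := by rw [mul_comm]
        simpa using h1
      set t := a ^ (m+1) * b with ht
      set S := ∑ k ∈ Finset.range (m+1), ((polyC m).coeff k) • (a ^ k * b) with hS
      have hPb : Polynomial.aeval a (polyC m) * b = S + ((m:ℂ)/(m+1)) • t := by
        rw [Polynomial.aeval_eq_sum_range' (Nat.lt_succ_of_le (degC m)) a, Finset.sum_mul]
        simp only [smul_mul_assoc]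
        rw [Finset.sum_range_succ, coeffC m]
      have h2 : (2:R) * t = a^(m+2) + a^m + (S + ((m:ℂ)/(m+1)) • t + b * Polynomial.aeval b (polyA m)) := by
        calc (2:R)*t = a^m * (2*(a*b)) := by rw [ht]; noncomm_ring
        _ = a^m*(a^2+b^2+1) := by rw [h]
        _ = a^(m+2) + (a^m*b)*b + a^m := by noncomm_ring
        _ = a^(m+2) + (Polynomial.aeval a (polyC m) + Polynomial.aeval b (polyA m))*b + a^m := by
            rw [ihm]
        _ = _ := by rw [add_mul, hPb, hQ]; abel
      have e1 : ((2:ℂ) - (m:ℂ)/(m+1)) • t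
          = a^(m+2) + a^m + S + b * Polynomial.aeval b (polyA m) := by
        rw [sub_smul]
        rw [two_mul] at h2
        rw [show (2:ℂ) • t = t + t from two_smul ℂ t, h2]
        abel
      have key : t = (((m:ℂ)+1)/((m:ℂ)+2)) • (a^(m+2) + a^m + S + b * Polynomial.aeval b (polyA m)) := by
        rw [← e1, smul_smul,
          show ((m:ℂ)+1)/((m:ℂ)+2) * ((2:ℂ) - (m:ℂ)/(m+1)) = 1 from by field_simp; ring,
          one_smul]
      have hSsplit : S = (∑ k ∈ Finset.range (m+1), ((polyC m).coeff k) • Polynomial.aeval a (polyC k))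
          + ∑ k ∈ Finset.range (m+1), ((polyC m).coeff k) • Polynomial.aeval b (polyA k) := by
        rw [hS, ← Finset.sum_add_distrib]
        exact Finset.sum_congr rfl fun k hk => by
          rw [ih k (Finset.mem_range.mp hk), smul_add]
      show t = _
      rw [key, recC m, recA m, map_smul, map_smul, ← smul_add]
      have hcast : ((m:ℂ)+1)/((m:ℂ)+2) = ((m:ℕ)+1:ℂ)/((m:ℕ)+2) := by push_cast; ring
      rw [hcast]
      congr 1
      simp only [map_add, map_mul, map_pow, map_sum, map_smul, Polynomial.aeval_X, map_one]
      rw [hSsplit]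
      have hpow : ((a^2+1)*a^m : R) = a^(m+2)+a^m := by
        rw [add_mul, one_mul, ← pow_add, Nat.add_comm]
      rw [hpow]
      abel
end

section
/- For every natural number n and every complex number x, A_n(x+i) − A_n(x−i) = 2i·xⁿ. -/
open Polynomial Finset

lemma AC_succ (n : ℕ) : AC (n+1) =
    (((n+1 : ℂ)/(n+2)) • (Polynomial.X * (AC n).1 +
        ∑ k ∈ Finset.range (n+1), ((AC n).2.coeff k) • (AC k).1),
     ((n+1 : ℂ)/(n+2)) • ((Polynomial.X^2 + 1) * Polynomial.X^n +
        ∑ k ∈ Finset.range (n+1), ((AC n).2.coeff k) • (AC k).2)) := by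
  rw [AC]
  rw [Finset.sum_attach (Finset.range (n+1)) (fun k => ((AC n).2.coeff k) • (AC k).1),
      Finset.sum_attach (Finset.range (n+1)) (fun k => ((AC n).2.coeff k) • (AC k).2)]

lemma polyA_succ (n : ℕ) : polyA (n+1) = ((n+1 : ℂ)/(n+2)) • (Polynomial.X * polyA n +
    ∑ k ∈ Finset.range (n+1), ((polyC n).coeff k) • polyA k) := by
  simp only [polyA, polyC, AC_succ]

lemma polyC_succ (n : ℕ) : polyC (n+1) = ((n+1 : ℂ)/(n+2)) •
    ((Polynomial.X^2 + 1) * Polynomial.X^n +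
    ∑ k ∈ Finset.range (n+1), ((polyC n).coeff k) • polyC k) := by
  simp only [polyA, polyC, AC_succ]

lemma evalA_succ (n : ℕ) (y : ℂ) : (polyA (n+1)).eval y =
    ((n+1 : ℂ)/(n+2)) * (y * (polyA n).eval y +
      ∑ k ∈ Finset.range (n+1), ((polyC n).coeff k) * (polyA k).eval y) := by
  simp [polyA_succ, eval_finset_sum, smul_eq_mul]
  ring

lemma evalC_succ (n : ℕ) (y : ℂ) : (polyC (n+1)).eval y =
    ((n+1 : ℂ)/(n+2)) * ((y^2 + 1) * y^n +
      ∑ k ∈ Finset.range (n+1), ((polyC n).coeff k) * (polyC k).eval y) := by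
  simp [polyC_succ, eval_finset_sum, smul_eq_mul]
  ring

lemma coeffC_succ (n : ℕ) (j : ℕ) : (polyC (n+1)).coeff j =
    ((n+1 : ℂ)/(n+2)) * (((Polynomial.X^(n+2) + Polynomial.X^n : Polynomial ℂ)).coeff j +
      ∑ k ∈ Finset.range (n+1), ((polyC n).coeff k) * (polyC k).coeff j) := by
  have h : (Polynomial.X^2 + 1) * Polynomial.X^n = (Polynomial.X^(n+2) + Polynomial.X^n : Polynomial ℂ) := by ring
  simp [polyC_succ, h, Polynomial.finset_sum_coeff, Polynomial.coeff_smul, smul_eq_mul, mul_sum]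
  rw [← Finset.mul_sum]
  split_ifs <;> ring

lemma sum_coeff_eval (p : Polynomial ℂ) (n : ℕ) (h1 : ∀ k, n+1 < k → p.coeff k = 0) (x : ℂ) :
    ∑ k ∈ Finset.range (n+1), p.coeff k * x^k = p.eval x - p.coeff (n+1) * x^(n+1) := by
  have hd : p.natDegree < n+2 :=
    Nat.lt_succ_of_le (Polynomial.natDegree_le_iff_coeff_eq_zero.mpr h1)
  rw [Polynomial.eval_eq_sum_range' hd, Finset.sum_range_succ _ (n+1)]
  ring

lemma key : ∀ n : ℕ,
    (∀ x : ℂ, (polyA n).eval (x + Complex.I) - (polyA n).eval (x - Complex.I)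
        = 2*Complex.I*x^n)
    ∧ (∀ x : ℂ, (polyA n).eval (x + Complex.I) + (polyA n).eval (x - Complex.I)
        + 2*(polyC n).eval x = 2*x^(n+1))
    ∧ ((polyC n).coeff (n+1) = (n : ℂ)/((n:ℂ)+1))
    ∧ (∀ k, n+1 < k → (polyC n).coeff k = 0) := by
  intro n
  induction n using Nat.strong_induction_on with
  | _ n ih =>
    cases n with
    | zero =>
      have hA0 : polyA 0 = Polynomial.X := by rw [polyA, AC]
      have hC0 : polyC 0 = 0 := by rw [polyC, AC]
      refine ⟨fun x => ?_, fun x => ?_, ?_, fun k hk => ?_⟩ <;> simp [hA0, hC0] <;> ring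
    | succ m =>
      obtain ⟨hPm, hQm, hμm, hzm⟩ := ih m (Nat.lt_succ_self m)
      have hm1 : ((m:ℂ)+1) ≠ 0 := by exact_mod_cast Nat.succ_ne_zero m
      have hm2 : ((m:ℂ)+2) ≠ 0 := by
        have : ((m:ℂ)+2) = ((m+2 : ℕ) : ℂ) := by push_cast; ring
        rw [this]; exact_mod_cast Nat.succ_ne_zero (m+1)
      have hc1 : ((m:ℂ)+1)/((m:ℂ)+2) * (2 - (m:ℂ)/((m:ℂ)+1)) = 1 := by
        field_simp; ring
      have hc2 : ((m:ℂ)+1)/((m:ℂ)+2) * (4 - 2*((m:ℂ)/((m:ℂ)+1))) = 2 := by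
        field_simp; ring
      have hsum := sum_coeff_eval (polyC m) m hzm
      have haP : ∀ k ∈ Finset.range (m+1), ∀ x : ℂ,
          (polyA k).eval (x + Complex.I) = x^(k+1) - (polyC k).eval x + Complex.I * x^k := by
        intro k hk x
        obtain ⟨h1, h2, _, _⟩ := ih k (Finset.mem_range.mp hk)
        linear_combination (h1 x + h2 x)/2
      have haM : ∀ k ∈ Finset.range (m+1), ∀ x : ℂ,
          (polyA k).eval (x - Complex.I) = x^(k+1) - (polyC k).eval x - Complex.I * x^k := by
        intro k hk x
        obtain ⟨h1, h2, _, _⟩ := ih k (Finset.mem_range.mp hk)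
        linear_combination (h2 x - h1 x)/2
      refine ⟨fun x => ?_, fun x => ?_, ?_, fun k hk => ?_⟩
      · -- P (m+1)
        rw [evalA_succ, evalA_succ]
        have key1 : (∑ k ∈ Finset.range (m+1), (polyC m).coeff k * (polyA k).eval (x+Complex.I))
            - (∑ k ∈ Finset.range (m+1), (polyC m).coeff k * (polyA k).eval (x-Complex.I))
            = 2*Complex.I*((polyC m).eval x - ((m:ℂ)/((m:ℂ)+1))*x^(m+1)) := by
          rw [← Finset.sum_sub_distrib]
          rw [Finset.sum_congr rfl (fun k hk => by
            rw [haP k hk x, haM k hk x]; ring :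
            ∀ k ∈ Finset.range (m+1), (polyC m).coeff k * (polyA k).eval (x+Complex.I)
              - (polyC m).coeff k * (polyA k).eval (x-Complex.I)
              = 2*Complex.I*((polyC m).coeff k * x^k))]
          rw [← Finset.mul_sum, hsum x, hμm]
        linear_combination (((m:ℂ)+1)/((m:ℂ)+2)) * key1
          + (((m:ℂ)+1)/((m:ℂ)+2)) * x * (hPm x)
          + (((m:ℂ)+1)/((m:ℂ)+2)) * Complex.I * (hQm x)
          + 2*Complex.I*x^(m+1)*hc1
      · -- Q (m+1)
        rw [evalA_succ, evalA_succ, evalC_succ]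
        have key2 : (∑ k ∈ Finset.range (m+1), (polyC m).coeff k * (polyA k).eval (x+Complex.I))
            + (∑ k ∈ Finset.range (m+1), (polyC m).coeff k * (polyA k).eval (x-Complex.I))
            + 2*(∑ k ∈ Finset.range (m+1), (polyC m).coeff k * (polyC k).eval x)
            = 2*x*((polyC m).eval x - ((m:ℂ)/((m:ℂ)+1))*x^(m+1)) := by
          rw [Finset.mul_sum, ← Finset.sum_add_distrib, ← Finset.sum_add_distrib]
          rw [Finset.sum_congr rfl (fun k hk => by
            obtain ⟨h1, h2, _, _⟩ := ih k (Finset.mem_range.mp hk)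
            linear_combination (polyC m).coeff k * h2 x :
            ∀ k ∈ Finset.range (m+1), ((polyC m).coeff k * (polyA k).eval (x+Complex.I)
              + (polyC m).coeff k * (polyA k).eval (x-Complex.I))
              + 2*((polyC m).coeff k * (polyC k).eval x)
              = 2*x*((polyC m).coeff k * x^k))]
          rw [← Finset.mul_sum, hsum x, hμm]
        linear_combination (((m:ℂ)+1)/((m:ℂ)+2)) * key2
          + (((m:ℂ)+1)/((m:ℂ)+2)) * x * (hQm x)
          + (((m:ℂ)+1)/((m:ℂ)+2)) * Complex.I * (hPm x)
          + 2*(((m:ℂ)+1)/((m:ℂ)+2))*x^m*Complex.I_sq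
          + x^(m+2)*hc2
      · -- top coefficient
        rw [coeffC_succ]
        have hz : ∑ k ∈ Finset.range (m+1), (polyC m).coeff k * (polyC k).coeff (m+1+1) = 0 := by
          refine Finset.sum_eq_zero fun k hk => ?_
          have hk' := Finset.mem_range.mp hk
          obtain ⟨_, _, _, h4⟩ := ih k (Finset.mem_range.mp hk)
          rw [h4 (m+2) (by omega), mul_zero]
        rw [hz]
        rw [Polynomial.coeff_add, Polynomial.coeff_X_pow, Polynomial.coeff_X_pow]
        rw [if_pos (by omega), if_neg (by omega)]
        push_cast
        rw [show ((m:ℂ)+1+1) = (m:ℂ)+2 from by ring]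
        ring
      · -- vanishing coefficients
        rw [coeffC_succ]
        have hz : ∑ j ∈ Finset.range (m+1), (polyC m).coeff j * (polyC j).coeff k = 0 := by
          refine Finset.sum_eq_zero fun j hj => ?_
          have hj' := Finset.mem_range.mp hj
          obtain ⟨_, _, _, h4⟩ := ih j (Finset.mem_range.mp hj)
          rw [h4 k (by omega), mul_zero]
        rw [hz]
        rw [Polynomial.coeff_add, Polynomial.coeff_X_pow, Polynomial.coeff_X_pow]
        rw [if_neg (by omega), if_neg (by omega)]
        ring

theorem stmt3 (n : ℕ) (x : ℂ) :
    (polyA n).eval (x + Complex.I) - (polyA n).eval (x - Complex.I) =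
      2 * Complex.I * x ^ n :=
  (key n).1 x
end

section
/- For every natural number n ≥ 1, the coefficients λ_n^k of C_n(X) satisfy: λ_n^{n+1} = n/(n+1); λ_n^n = 0; for every integer k with 1 ≤ k ≤ n−1, λ_n^k = −(1/(n+1))·binom(n+1, k)·(2i)^{n+1−k}·β_{n+1−k}; and λ_n^0 = 2·(1 − 2^{n+1})·i^{n+1}·β_{n+1}/(n+1). Here binom denotes the binomial coefficient. -/
/-!
Put `b_m = (2i)^m β_m` and `G_m(X) = ∑_k binom(m,k) b_{m-k} X^k = (2i)^m B_m(X / 2i)`. Then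
`C_n = (X - i) X^n - (G_{n+1}(X) - G_{n+1}(i)) / (n + 1)`, and the coefficient formulas are read
off from this closed form, with `G_m(i) = i^m (2 - 2^m) β_m` coming from
`B_m(1/2) = (2^{1-m} - 1) β_m`.

The closed form is checked against the recursion with exponential generating functions in a new
variable `t`: binomial convolutions become products, `G` has generating function `b(t) e^{Xt}` with
`b(t) = 2it / (e^{2it} - 1)`, and the recursion becomes a first-order linear differential equation
which reduces to Euler's identity `b² = (1 - 2it) b - t b'`.
-/

open Polynomial Finset

section ExponentialGeneratingFunction

open PowerSeries hiding X C
open scoped Nat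

variable {A : Type*} [CommRing A]

noncomputable def binomConv (a c : ℕ → A) (n : ℕ) : A :=
  ∑ p ∈ antidiagonal n, (n.choose p.1 : A) * (a p.1 * c p.2)

theorem binomConv_eq_sum_range (a c : ℕ → A) (n : ℕ) :
    binomConv a c n = ∑ k ∈ range (n + 1), (n.choose k : A) * (a (n - k) * c k) := by
  rw [binomConv, ← Nat.sum_antidiagonal_swap]
  simp only [Prod.fst_swap, Prod.snd_swap]
  rw [Nat.sum_antidiagonal_eq_sum_range_succ (fun i j => (n.choose j : A) * (a j * c i))]
  refine sum_congr rfl fun k hk => ?_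
  rw [Nat.choose_symm (by simpa [Nat.lt_succ_iff] using hk)]

theorem derivative_rescale (c : A) (f : PowerSeries A) :
    d⁄dX A (rescale c f) = PowerSeries.C c * rescale c (d⁄dX A f) := by
  ext n
  simp only [PowerSeries.coeff_derivative, coeff_rescale, PowerSeries.coeff_C_mul, pow_succ]
  ring

variable [Algebra ℚ A]

noncomputable def egf : (ℕ → A) →ₗ[A] PowerSeries A where
  toFun a := PowerSeries.mk fun n => algebraMap ℚ A (1 / (n ! : ℚ)) * a n
  map_add' a c := by ext n; simp [mul_add]
  map_smul' r a := by
    ext n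
    simp only [Pi.smul_apply, smul_eq_mul, coeff_mk, RingHom.id_apply, map_smul]
    ring

theorem coeff_egf (a : ℕ → A) (n : ℕ) :
    PowerSeries.coeff n (egf a) = algebraMap ℚ A (1 / n !) * a n := by
  simp [egf]

theorem egf_injective : Function.Injective (egf : (ℕ → A) → PowerSeries A) := by
  intro a c h
  funext n
  have hn := congrArg (PowerSeries.coeff n) h
  rw [coeff_egf, coeff_egf] at hn
  have hu : IsUnit (algebraMap ℚ A (1 / n !)) := (IsUnit.mk0 _ (by positivity)).map _
  exact hu.mul_left_cancel hn

theorem egf_mul (a c : ℕ → A) : egf a * egf c = egf (binomConv a c) := by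
  ext n
  simp only [PowerSeries.coeff_mul, coeff_egf, binomConv, mul_sum]
  refine sum_congr rfl fun p hp => ?_
  obtain ⟨i, j⟩ := p
  rw [HasAntidiagonal.mem_antidiagonal] at hp
  subst hp
  have hij : (1 / ((i + j)! : ℚ)) * ((i + j).choose i : ℚ) = 1 / i ! * (1 / j !) := by
    have h : ((i + j).choose i : ℚ) * i ! * j ! = (i + j)! := by
      rw [← Nat.cast_mul, ← Nat.cast_mul, Nat.choose_symm_add,
        Nat.add_choose_mul_factorial_mul_factorial]
    have hc : ((i + j).choose i : ℚ) ≠ 0 := Nat.cast_ne_zero.mpr (Nat.choose_pos (by omega)).ne'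
    rw [← h]
    field_simp
  calc _ = algebraMap ℚ A (1 / i ! * (1 / j !)) * (a i * c j) := by rw [map_mul]; ring
    _ = _ := by rw [← hij, map_mul, map_natCast]; ring

theorem egf_natCast_mul (a : ℕ → A) :
    egf (fun n => (n : A) * a n) = PowerSeries.X * d⁄dX A (egf a) := by
  ext (_ | n)
  · simp [coeff_egf]
  · rw [coeff_succ_X_mul, PowerSeries.coeff_derivative, coeff_egf, coeff_egf]
    push_cast
    ring

theorem egf_natCast_mul_pred (a : ℕ → A) :
    egf (fun n => (n : A) * a (n - 1)) = PowerSeries.X * egf a := by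
  ext (_ | n)
  · simp [coeff_egf]
  · rw [coeff_succ_X_mul, coeff_egf, coeff_egf, Nat.add_sub_cancel,
      ← map_natCast (algebraMap ℚ A), ← mul_assoc, ← map_mul, Nat.factorial_succ]
    congr 2
    push_cast
    field_simp

theorem rescale_egf (c : A) (a : ℕ → A) : rescale c (egf a) = egf (fun n => c ^ n * a n) := by
  ext n
  simp only [coeff_rescale, coeff_egf]
  ring

theorem rescale_exp_eq_egf (c : A) : rescale c (exp A) = egf (fun n => c ^ n) := by
  ext n
  simp [coeff_egf, mul_comm]

theorem derivative_rescale_exp (c : A) :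
    d⁄dX A (rescale c (exp A)) = PowerSeries.C c * rescale c (exp A) := by
  rw [derivative_rescale, derivative_exp]

theorem bernoulliPowerSeries_eq_egf :
    bernoulliPowerSeries A = egf (fun n => algebraMap ℚ A (bernoulli n)) := by
  ext n
  simp [bernoulliPowerSeries, coeff_egf, div_eq_mul_inv, mul_comm]

end ExponentialGeneratingFunction

section BernoulliPowerSeries

open PowerSeries hiding X C

variable {A : Type*} [CommRing A] [IsDomain A] [Algebra ℚ A]

theorem exp_sub_one_ne_zero : exp A - 1 ≠ 0 := by
  intro h
  simpa using congrArg (PowerSeries.coeff 1) h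

-- Euler's `∑ binom(m,k) β_k β_{m-k} = (1 - m) β_m - m β_{m-1}` for generating functions
theorem bernoulliPowerSeries_sq :
    bernoulliPowerSeries A ^ 2 = bernoulliPowerSeries A
      - PowerSeries.X * d⁄dX A (bernoulliPowerSeries A)
      - PowerSeries.X * bernoulliPowerSeries A := by
  set B := bernoulliPowerSeries A
  have h : B * (exp A - 1) = PowerSeries.X := bernoulliPowerSeries_mul_exp_sub_one A
  have hd : d⁄dX A B * (exp A - 1) + B * exp A = 1 := by
    have := congrArg (d⁄dX A) h
    simp only [Derivation.leibniz, map_sub, derivative_exp, Derivation.map_one_eq_zero,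
      PowerSeries.derivative_X, smul_eq_mul] at this
    linear_combination this
  apply mul_left_cancel₀ (pow_ne_zero 2 (exp_sub_one_ne_zero (A := A)))
  linear_combination ((B - 1) * (exp A - 1)) * h + (PowerSeries.X * (exp A - 1)) * hd

-- the generating-function form of `B_m(1/2) = (2^{1-m} - 1) β_m`
theorem rescale_two_bernoulliPowerSeries_mul_exp_add_one :
    rescale 2 (bernoulliPowerSeries A) * (exp A + 1) = 2 * bernoulliPowerSeries A := by
  have h : bernoulliPowerSeries A * (exp A - 1) = PowerSeries.X :=
    bernoulliPowerSeries_mul_exp_sub_one A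
  have h2 := congrArg (rescale 2) h
  rw [map_mul, map_sub, map_one, rescale_X, ← Nat.cast_ofNat, ← exp_pow_eq_rescale_exp] at h2
  apply mul_left_cancel₀ (exp_sub_one_ne_zero (A := A))
  simp only [Nat.cast_ofNat, map_ofNat] at h2
  linear_combination h2 - 2 * h

theorem rescale_bernoulliPowerSeries_sq (c : A) :
    rescale c (bernoulliPowerSeries A) ^ 2 = rescale c (bernoulliPowerSeries A)
      - PowerSeries.X * d⁄dX A (rescale c (bernoulliPowerSeries A))
      - PowerSeries.C c * PowerSeries.X * rescale c (bernoulliPowerSeries A) := by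
  have h := congrArg (rescale c) (bernoulliPowerSeries_sq (A := A))
  simp only [map_pow, map_sub, map_mul, rescale_X] at h
  rw [derivative_rescale]
  linear_combination h

end BernoulliPowerSeries

section ClosedForm

open Complex (I)
open PowerSeries (rescale exp)
open scoped PowerSeries

noncomputable def scaledBernoulli (k : ℕ) : ℂ := (2 * I) ^ k * (bernoulli k : ℂ)

-- `(2i)^m B_m(X / 2i)`, with `B_m` the Bernoulli polynomial
noncomputable def scaledBernoulliPoly (m : ℕ) : ℂ[X] :=
  binomConv (fun k => C (scaledBernoulli k)) (fun k => X ^ k) m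

-- the value of `scaledBernoulliPoly m` at `X = i` (see `egf_constTerm`)
noncomputable def constTerm (m : ℕ) : ℂ := I ^ m * (2 - 2 ^ m) * (bernoulli m : ℂ)

noncomputable def closedC (n : ℕ) : ℂ[X] :=
  (X - C I) * X ^ n - C ((n + 1 : ℂ)⁻¹) * (scaledBernoulliPoly (n + 1) - C (constTerm (n + 1)))

theorem coeff_scaledBernoulliPoly (m k : ℕ) :
    (scaledBernoulliPoly m).coeff k = m.choose k * scaledBernoulli (m - k) := by
  rw [scaledBernoulliPoly, binomConv_eq_sum_range, finsetSum_coeff]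
  simp only [← C_eq_natCast, ← mul_assoc, ← C_mul, coeff_C_mul_X_pow]
  rw [sum_ite_eq]
  split_ifs with hk
  · rfl
  · rw [Nat.choose_eq_zero_of_lt (by simpa using hk), Nat.cast_zero, zero_mul]

theorem scaledBernoulli_zero : scaledBernoulli 0 = 1 := by
  simp [scaledBernoulli]

theorem scaledBernoulli_one : scaledBernoulli 1 = -I := by
  rw [scaledBernoulli, _root_.bernoulli_one]
  push_cast
  ring

theorem scaledBernoulliPoly_zero : scaledBernoulliPoly 0 = 1 := by
  simp [scaledBernoulliPoly, binomConv, scaledBernoulli_zero]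

theorem scaledBernoulliPoly_one : scaledBernoulliPoly 1 = X - C I := by
  rw [scaledBernoulliPoly, binomConv_eq_sum_range]
  simp [sum_range_succ, scaledBernoulli_zero, scaledBernoulli_one, sub_eq_neg_add]

theorem constTerm_zero : constTerm 0 = 1 := by
  norm_num [constTerm]

theorem closedC_zero : closedC 0 = 0 := by
  simp [closedC, scaledBernoulliPoly_one, constTerm]

theorem coeff_closedC (n k : ℕ) :
    (closedC n).coeff k = (if k = n + 1 then 1 else 0) - I * (if k = n then 1 else 0)
      - (n + 1 : ℂ)⁻¹ * ((n + 1).choose k * scaledBernoulli (n + 1 - k)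
        - if k = 0 then constTerm (n + 1) else 0) := by
  simp only [closedC, sub_mul, coeff_sub, ← pow_succ', coeff_X_pow, coeff_C_mul, coeff_C,
    coeff_scaledBernoulliPoly]

theorem egf_scaledBernoulli :
    egf (fun k => C (scaledBernoulli k)) = rescale (C (2 * I)) (bernoulliPowerSeries ℂ[X]) := by
  rw [bernoulliPowerSeries_eq_egf, rescale_egf]
  congr 1
  funext k
  simp [scaledBernoulli, Polynomial.algebraMap_apply]

theorem egf_scaledBernoulliPoly :
    egf scaledBernoulliPoly
      = rescale (C (2 * I)) (bernoulliPowerSeries ℂ[X]) * rescale X (exp ℂ[X]) := by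
  rw [← egf_scaledBernoulli, rescale_exp_eq_egf, egf_mul]
  rfl

theorem egf_constTerm :
    egf (fun m => C (constTerm m))
      = rescale (C (2 * I)) (bernoulliPowerSeries ℂ[X]) * rescale (C I) (exp ℂ[X]) := by
  have h := congrArg (rescale (C I))
    (rescale_two_bernoulliPowerSeries_mul_exp_add_one (A := ℂ[X]))
  simp only [map_mul, map_add, map_one, map_ofNat, PowerSeries.rescale_rescale] at h
  have hc : egf (fun m => C (constTerm m)) = rescale (C I) (bernoulliPowerSeries ℂ[X])
      + rescale (C I) (bernoulliPowerSeries ℂ[X])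
      - rescale (C (2 * I)) (bernoulliPowerSeries ℂ[X]) := by
    refine PowerSeries.ext fun n => ?_
    simp only [coeff_egf, map_add, map_sub, PowerSeries.coeff_rescale, bernoulliPowerSeries,
      PowerSeries.coeff_mk]
    simp only [constTerm, Polynomial.algebraMap_apply, ← C_pow, ← C_mul, ← C_sub, ← C_add]
    congr 1
    simp only [eq_ratCast]
    push_cast
    ring
  rw [hc, C_mul, map_ofNat]
  linear_combination -h

theorem natCast_mul_closedC_pred (n : ℕ) :
    (n : ℂ[X]) * closedC (n - 1)
      = (X - C I) * ((n : ℂ[X]) * X ^ (n - 1)) - scaledBernoulliPoly n + C (constTerm n) := by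
  rcases n with _ | n
  · simp [scaledBernoulliPoly_zero, constTerm_zero]
  · have hn : ((n + 1 : ℕ) : ℂ[X]) * C ((n + 1 : ℂ)⁻¹) = 1 := by
      rw [← C_eq_natCast, ← C_mul, Nat.cast_succ,
        mul_inv_cancel₀ (Nat.cast_add_one_ne_zero n), C_1]
    rw [Nat.add_sub_cancel, closedC]
    linear_combination -(scaledBernoulliPoly (n + 1) - C (constTerm (n + 1))) * hn

theorem X_mul_egf_closedC :
    PowerSeries.X * egf closedC
      = PowerSeries.C (X - C I) * PowerSeries.X * rescale X (exp ℂ[X])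
        - rescale (C (2 * I)) (bernoulliPowerSeries ℂ[X]) * rescale X (exp ℂ[X])
        + rescale (C (2 * I)) (bernoulliPowerSeries ℂ[X]) * rescale (C I) (exp ℂ[X]) := by
  have h : (fun n : ℕ => (n : ℂ[X]) * closedC (n - 1))
      = (X - C I) • (fun n : ℕ => (n : ℂ[X]) * X ^ (n - 1)) - scaledBernoulliPoly
        + fun n => C (constTerm n) := by
    funext n
    simp [natCast_mul_closedC_pred]
  rw [← egf_natCast_mul_pred, h, map_add, map_sub, LinearMap.map_smul, egf_natCast_mul_pred,
    egf_scaledBernoulliPoly, egf_constTerm, rescale_exp_eq_egf, PowerSeries.smul_eq_C_mul]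
  ring

theorem egf_closedC_ode :
    PowerSeries.X * d⁄dX ℂ[X] (egf closedC)
        + rescale (C (2 * I)) (bernoulliPowerSeries ℂ[X]) * egf closedC
      = PowerSeries.X * (PowerSeries.C (X ^ 2 + 1) * rescale X (exp ℂ[X])
        - PowerSeries.C (C I) * egf closedC) := by
  set β := rescale (C (2 * I)) (bernoulliPowerSeries ℂ[X])
  set F := egf closedC
  set Ex := rescale X (exp ℂ[X])
  set Ei := rescale (C I) (exp ℂ[X])
  set ξ : ℂ[X]⟦X⟧ := PowerSeries.C X
  set ι : ℂ[X]⟦X⟧ := PowerSeries.C (C I)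
  have hι : ι ^ 2 = -1 := by simp [ι, ← map_pow]
  have hH : PowerSeries.X * F = (ξ - ι) * PowerSeries.X * Ex - β * Ex + β * Ei := by
    rw [X_mul_egf_closedC, map_sub]
  have hdEx : d⁄dX ℂ[X] Ex = ξ * Ex := derivative_rescale_exp X
  have hdEi : d⁄dX ℂ[X] Ei = ι * Ei := derivative_rescale_exp (C I)
  have hdξ : d⁄dX ℂ[X] ξ = 0 := PowerSeries.derivative_C
  have hdι : d⁄dX ℂ[X] ι = 0 := PowerSeries.derivative_C
  have hD := congrArg (d⁄dX ℂ[X]) hH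
  simp only [Derivation.leibniz, PowerSeries.derivative_X, map_add, map_sub, smul_eq_mul, hdEx,
    hdEi, hdξ, hdι] at hD
  have hE : β ^ 2 = β - PowerSeries.X * d⁄dX ℂ[X] β - 2 * ι * PowerSeries.X * β := by
    rw [show 2 * ι = PowerSeries.C (C (2 * I)) by simp only [ι, map_mul, map_ofNat]]
    exact rescale_bernoulliPowerSeries_sq _
  rw [show PowerSeries.C (X ^ 2 + 1) = ξ ^ 2 + 1 by simp [ξ]]
  -- after multiplying by `t` and substituting `t F`, only Euler's identity `hE` is needed
  apply mul_left_cancel₀ (PowerSeries.X_ne_zero (R := ℂ[X]))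
  linear_combination PowerSeries.X * hD + (β + PowerSeries.X * ι - 1) * hH
    + (Ei - Ex) * hE - PowerSeries.X ^ 2 * Ex * hι

theorem natCast_mul_closedC_add_binomConv (m : ℕ) :
    (m : ℂ[X]) * closedC m + binomConv (fun k => C (scaledBernoulli k)) closedC m
      = (m : ℂ[X]) * ((X ^ 2 + 1) * X ^ (m - 1) - C I * closedC (m - 1)) := by
  have hR : egf (fun k => (X ^ 2 + 1) * X ^ k - C I * closedC k)
      = PowerSeries.C (X ^ 2 + 1) * rescale X (exp ℂ[X]) - PowerSeries.C (C I) * egf closedC := by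
    have : (fun k => (X ^ 2 + 1) * X ^ k - C I * closedC k)
        = (X ^ 2 + 1) • (fun k : ℕ => X ^ k) - C I • closedC := by
      funext k
      simp
    rw [this, map_sub, LinearMap.map_smul, LinearMap.map_smul, ← rescale_exp_eq_egf,
      PowerSeries.smul_eq_C_mul, PowerSeries.smul_eq_C_mul]
  have key : egf ((fun m : ℕ => (m : ℂ[X]) * closedC m)
      + binomConv (fun k => C (scaledBernoulli k)) closedC)
      = egf (fun m => (m : ℂ[X]) * ((X ^ 2 + 1) * X ^ (m - 1) - C I * closedC (m - 1))) := by
    rw [map_add, egf_natCast_mul_pred (fun k => (X ^ 2 + 1) * X ^ k - C I * closedC k), hR,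
      egf_natCast_mul, ← egf_mul, egf_scaledBernoulli, egf_closedC_ode]
  exact congrFun (egf_injective key) m

theorem sum_C_coeff_closedC_mul (n : ℕ) :
    ∑ k ∈ range (n + 1), C ((closedC n).coeff k) * closedC k
      = -(C I * closedC n) - C ((n + 1 : ℂ)⁻¹)
        * (binomConv (fun k => C (scaledBernoulli k)) closedC (n + 1) - closedC (n + 1)) := by
  have hconv : binomConv (fun k => C (scaledBernoulli k)) closedC (n + 1) - closedC (n + 1)
      = ∑ k ∈ range (n + 1),
          ((n + 1).choose k : ℂ[X]) * (C (scaledBernoulli (n + 1 - k)) * closedC k) := by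
    rw [binomConv_eq_sum_range, sum_range_succ]
    simp [scaledBernoulli]
  have hterm : ∀ k ∈ range (n + 1), C ((closedC n).coeff k) * closedC k
      = -(if k = n then C I * closedC n else 0) - C ((n + 1 : ℂ)⁻¹)
        * (((n + 1).choose k : ℂ[X]) * (C (scaledBernoulli (n + 1 - k)) * closedC k)) := by
    intro k hk
    rcases Nat.eq_zero_or_pos k with rfl | hk0
    · split_ifs with h0
      · subst h0
        simp [closedC_zero]
      · simp [closedC_zero]
    rw [coeff_closedC, if_neg (by simp at hk; omega), if_neg hk0.ne']
    split_ifs with hkn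
    · subst hkn
      simp only [map_sub, map_mul, map_natCast, C_0, C_1]
      ring
    · simp only [map_sub, map_mul, map_natCast, C_0]
      ring
  rw [sum_congr rfl hterm, sum_sub_distrib, sum_neg_distrib, sum_ite_eq',
    if_pos (self_mem_range_succ n), hconv, mul_sum]

theorem closedC_succ (n : ℕ) :
    closedC (n + 1) = ((n + 1 : ℂ) / (n + 2)) •
      ((X ^ 2 + 1) * X ^ n + ∑ k ∈ range (n + 1), (closedC n).coeff k • closedC k) := by
  have hT := natCast_mul_closedC_add_binomConv (n + 1)
  rw [Nat.add_sub_cancel, ← C_eq_natCast, Nat.cast_succ] at hT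
  have ha : (n + 1 : ℂ) ≠ 0 := Nat.cast_add_one_ne_zero n
  have hk1 : C ((n + 1 : ℂ)⁻¹) * C (n + 1 : ℂ) = 1 := by
    rw [← C_mul, inv_mul_cancel₀ ha, C_1]
  have hk2 : C ((n + 1 : ℂ) / (n + 2)) * (1 + C ((n + 1 : ℂ)⁻¹)) = 1 := by
    have hb : (n + 2 : ℂ) ≠ 0 := by exact_mod_cast Nat.succ_ne_zero (n + 1)
    rw [← C_1, ← C_add, ← C_mul]
    congr 1
    field_simp
    ring
  simp only [smul_eq_C_mul]
  rw [sum_C_coeff_closedC_mul]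
  linear_combination C ((n + 1 : ℂ) / (n + 2)) * C ((n + 1 : ℂ)⁻¹) * hT
    + C ((n + 1 : ℂ) / (n + 2)) * ((X ^ 2 + 1) * X ^ n - C I * closedC n - closedC (n + 1)) * hk1
    - closedC (n + 1) * hk2

theorem polyC_eq_closedC (n : ℕ) : polyC n = closedC n := by
  induction n using Nat.strong_induction_on with
  | _ n ih =>
  rcases n with _ | n
  · rw [closedC_zero, polyC, AC]
  rw [polyC, AC, closedC_succ,
    ← sum_attach (range (n + 1)) (fun k => (closedC n).coeff k • closedC k)]
  dsimp only
  congr 3 with k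
  rw [show (AC n).2 = closedC n from ih n (by omega),
    show (AC k).2 = closedC k from ih k (by have := mem_range.mp k.2; omega)]

end ClosedForm

theorem stmt11 (n : ℕ) (hn : 1 ≤ n) :
    (polyC n).coeff (n + 1) = (n : ℂ) / (n + 1) ∧
    (polyC n).coeff n = 0 ∧
    (∀ k : ℕ, 1 ≤ k → k ≤ n - 1 →
      (polyC n).coeff k =
        -((1 / (n + 1 : ℂ)) * ((n + 1).choose k : ℂ) * (2 * Complex.I) ^ (n + 1 - k) *
          ((bernoulli (n + 1 - k) : ℚ) : ℂ))) ∧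
    (polyC n).coeff 0 =
      2 * (1 - 2 ^ (n + 1)) * Complex.I ^ (n + 1) * ((bernoulli (n + 1) : ℚ) : ℂ) / (n + 1) := by
  have ha : (n + 1 : ℂ) ≠ 0 := Nat.cast_add_one_ne_zero n
  simp only [polyC_eq_closedC]
  refine ⟨?_, ?_, fun k hk1 hk2 => ?_, ?_⟩
  · rw [coeff_closedC, if_pos rfl, if_neg (by omega), if_neg (by omega), Nat.choose_self,
      Nat.sub_self, scaledBernoulli_zero]
    field_simp
    ring
  · rw [coeff_closedC, if_neg (by omega), if_pos rfl, if_neg (by omega),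
      Nat.choose_succ_self_right, Nat.add_sub_cancel_left, Nat.cast_add_one, scaledBernoulli_one]
    field_simp
    ring
  · rw [coeff_closedC, if_neg (by omega), if_neg (by omega), if_neg (by omega), scaledBernoulli]
    field_simp
    ring
  · rw [coeff_closedC, if_neg (by omega), if_neg (by omega), if_pos rfl, Nat.choose_zero_right,
      Nat.sub_zero, scaledBernoulli, constTerm, mul_pow]
    field_simp
    ring
end
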